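/- Let d ≥ 2, let D = (d_1, …, d_d) be a sequence of d points of ℝ^d with ⟦D⟧ ≠ 0, let ζ > 0, let r ∈ ℝ^{d−1}, and let p := (r, z_D(r) + ζ) ∈ ℝ^d be the point stacked with vertical shift ζ above the hyperplane h(D). Set X := (d_1, …, d_{d−2})∘p, S := X∘d_{d−1} and T := X∘d_d, and assume ⟦S⟧ ≠ 0 and ⟦T⟧ ≠ 0. Then the absolute value of the creasing on the interior ridge X equals ζ·|⟦D⟧|/(|⟦S⟧|·|⟦T⟧|), i.e. |(z_T(π(d_{d−1})) − z_S(π(d_{d−1})))/⟦S⟧| = ζ·|⟦D⟧/(⟦S⟧·⟦T⟧)|. -/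

import Mathlib

/-! Write `T = X ∘ d_d`, which is `D` with its `(d-1)`-st point replaced by `p`, and
`a = π(d_{d-1})`. The affine function `z_T - z_D` vanishes at the projections of all points of
`T` except `p`, where it takes the value `ζ`. By Cramer's rule the minors
`⟦T with π(T_j) replaced by a⟧` are homogeneous barycentric coordinates of `a` with respect
to `π(T)`, and the only one that survives is `⟦D⟧`; hence `⟦T⟧ (z_T - z_D)(a) = ζ ⟦D⟧`.
Finally `z_S(a) = z_D(a)`, since both hyperplanes contain `d_{d-1}`. -/

/-- `[S]`: determinant of the k×k matrix whose columns are the points of `S`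
with an appended final entry 1. -/
noncomputable def mdet {k : ℕ} (S : Fin k → (Fin (k - 1) → ℝ)) : ℝ :=
  Matrix.det (Matrix.of (fun i j : Fin k =>
    if h : (i : ℕ) < k - 1 then S j ⟨i, h⟩ else 1))

/-- `π`: deletion of the last coordinate. -/
def projZ {d : ℕ} (p : Fin d → ℝ) : Fin (d - 1) → ℝ :=
  fun i => p (Fin.castLE (Nat.sub_le d 1) i)

/-- `⟦S⟧ = [π(S)]` for a sequence of d points of ℝ^d. -/
noncomputable def pdet {d : ℕ} (S : Fin d → (Fin d → ℝ)) : ℝ :=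
  mdet (fun i => projZ (S i))

/-- last ('z') coordinate of a point of ℝ^d. -/
def zc {d : ℕ} (q : Fin d → ℝ) : ℝ :=
  if h : 0 < d then q ⟨d - 1, by omega⟩ else 0

/-- `(p, z)`: point of ℝ^d obtained from `p ∈ ℝ^{d-1}` by appending `z`. -/
def liftPt {d : ℕ} (p : Fin (d - 1) → ℝ) (z : ℝ) : Fin d → ℝ :=
  fun i => if h : (i : ℕ) < d - 1 then p ⟨i, h⟩ else z

/-- concatenation `X ∘ s` of a sequence of `k-1` points with one more point. -/
def snoc' {α : Type*} {k : ℕ} (X : Fin (k - 1) → α) (s : α) : Fin k → α :=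
  fun i => if h : (i : ℕ) < k - 1 then X ⟨i, h⟩ else s

open Function

section Cramer

variable {k : ℕ}

theorem mdet_eq_det (P : Fin k → Fin (k - 1) → ℝ) :
    mdet P = (Matrix.of fun i j => liftPt (P j) 1 i).det := rfl

theorem updateCol_liftPt (P : Fin k → Fin (k - 1) → ℝ) (j : Fin k) (a : Fin (k - 1) → ℝ) :
    (Matrix.of fun i j => liftPt (P j) 1 i).updateCol j (liftPt a 1) =
      Matrix.of fun i j' => liftPt (update P j a j') 1 i := by
  ext i j'
  by_cases h : j' = j
  · subst h; simp
  · simp [h]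

theorem sum_mdet_update_smul_and_sum_mdet_update (hk : 0 < k) (P : Fin k → Fin (k - 1) → ℝ)
    (a : Fin (k - 1) → ℝ) :
    ∑ j, mdet (update P j a) • P j = mdet P • a ∧ ∑ j, mdet (update P j a) = mdet P := by
  have h := Matrix.mulVec_cramer (Matrix.of fun i j => liftPt (P j) 1 i) (liftPt a 1)
  have hc : Matrix.cramer (Matrix.of fun i j => liftPt (P j) 1 i) (liftPt a 1) =
      fun j => mdet (update P j a) := by
    funext j
    rw [Matrix.cramer_apply, updateCol_liftPt]
    rfl
  rw [hc, ← mdet_eq_det] at h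
  refine ⟨?_, ?_⟩
  · funext i
    have hi := congrFun h (Fin.castLE (Nat.sub_le k 1) i)
    simpa [Matrix.mulVec, dotProduct, liftPt, mul_comm] using hi
  · have hi := congrFun h ⟨k - 1, by omega⟩
    simpa [Matrix.mulVec, dotProduct, liftPt] using hi

theorem mdet_smul_apply_eq_sum {V : Type*} [AddCommGroup V] [Module ℝ V] (hk : 0 < k)
    (f : (Fin (k - 1) → ℝ) →ᵃ[ℝ] V) (P : Fin k → Fin (k - 1) → ℝ) (a : Fin (k - 1) → ℝ) :
    mdet P • f a = ∑ j, mdet (update P j a) • f (P j) := by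
  obtain ⟨hpoint, hweight⟩ := sum_mdet_update_smul_and_sum_mdet_update hk P a
  have hf : ∀ x, f x = f.linear x + f 0 := fun x => congrFun f.decomp x
  calc mdet P • f a = f.linear (mdet P • a) + mdet P • f 0 := by rw [hf a, smul_add, map_smul]
    _ = ∑ j, mdet (update P j a) • (f.linear (P j) + f 0) := by
      rw [← hpoint, ← hweight, map_sum, Finset.sum_smul, ← Finset.sum_add_distrib]
      simp only [map_smul, smul_add]
    _ = ∑ j, mdet (update P j a) • f (P j) := by simp only [← hf]

theorem mdet_smul_apply_eq_of_apply_eq_zero {V : Type*} [AddCommGroup V] [Module ℝ V]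
    (hk : 0 < k) (f : (Fin (k - 1) → ℝ) →ᵃ[ℝ] V) (P : Fin k → Fin (k - 1) → ℝ)
    (a : Fin (k - 1) → ℝ) (j₀ : Fin k) (hf : ∀ j ≠ j₀, f (P j) = 0) :
    mdet P • f a = mdet (update P j₀ a) • f (P j₀) := by
  rw [mdet_smul_apply_eq_sum hk, Finset.sum_eq_single j₀ (fun j _ hj => by rw [hf j hj, smul_zero])
    (by simp)]

end Cramer

section Points

variable {d : ℕ}

@[simp]
theorem projZ_liftPt (p : Fin (d - 1) → ℝ) (z : ℝ) : projZ (liftPt p z : Fin d → ℝ) = p := by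
  funext i
  simp [projZ, liftPt]

theorem zc_liftPt (hd : 0 < d) (p : Fin (d - 1) → ℝ) (z : ℝ) : zc (liftPt p z : Fin d → ℝ) = z := by
  simp [zc, liftPt, hd]

theorem snoc'_last {α : Type*} {k : ℕ} (X : Fin (k - 1) → α) (s : α) (h : k - 1 < k) :
    snoc' X s ⟨k - 1, h⟩ = s :=
  dif_neg (lt_irrefl _)

theorem snoc'_snoc'_castLE_eq_update {α : Type*} {k : ℕ} (hk : 1 < k) (D : Fin k → α) (p : α) :
    snoc' (k := k) (snoc' (k := k - 1) (fun i : Fin (k - 1 - 1) => D (Fin.castLE (by omega) i)) p)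
      (D ⟨k - 1, by omega⟩) = update D ⟨k - 2, by omega⟩ p := by
  funext ⟨i, hi⟩
  simp only [snoc', update_apply, Fin.ext_iff]
  split_ifs <;> first | rfl | omega | (congr 1; ext; simp; omega)

theorem pdet_update_mul_sub_eq (hd : 0 < d) (D : Fin d → Fin d → ℝ) (j₀ : Fin d)
    (p : Fin d → ℝ) (zD zT : (Fin (d - 1) → ℝ) →ᵃ[ℝ] ℝ)
    (hzD : ∀ i, zD (projZ (D i)) = zc (D i))
    (hzT : ∀ i, zT (projZ (update D j₀ p i)) = zc (update D j₀ p i)) :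
    pdet (update D j₀ p) * (zT (projZ (D j₀)) - zD (projZ (D j₀))) =
      pdet D * (zc p - zD (projZ p)) := by
  have hgap : ∀ j ≠ j₀, (zT - zD) (projZ (update D j₀ p j)) = 0 := by
    intro j hj
    have h := hzT j
    rw [update_of_ne hj] at h ⊢
    rw [AffineMap.coe_sub, Pi.sub_apply, h, hzD, sub_self]
  have hupdate : update (fun i => projZ (update D j₀ p i)) j₀ (projZ (D j₀)) =
      fun i => projZ (D i) := by
    funext i
    by_cases hi : i = j₀
    · subst hi; simp
    · simp [hi]
  have h := mdet_smul_apply_eq_of_apply_eq_zero hd (zT - zD) _ (projZ (D j₀)) j₀ hgap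
  rw [hupdate, AffineMap.coe_sub, Pi.sub_apply, Pi.sub_apply, hzT j₀, update_self] at h
  exact h

end Points

/-- Lemma 6, interior ridges: stacking `p = (r, z_D(r) + ζ)` with `ζ > 0`
above the facet spanned by `D = (d_1, …, d_d)` produces, on the interior ridge
`X := (d_1, …, d_{d-2}) ∘ p`, a creasing of absolute value `ζ·|⟦D⟧/(⟦S⟧·⟦T⟧)|`, where
`S := X ∘ d_{d-1}` and `T := X ∘ d_d`. -/
theorem stmt6 {d : ℕ} (hd : 2 ≤ d) (D : Fin d → (Fin d → ℝ))
    (ζ : ℝ) (hζ : 0 < ζ) (r : Fin (d - 1) → ℝ)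
    (zD : (Fin (d - 1) → ℝ) →ᵃ[ℝ] ℝ)
    (hzD : ∀ i, zD (projZ (D i)) = zc (D i))
    (X : Fin (d - 1) → (Fin d → ℝ))
    (hX : X = snoc' (k := d - 1)
      (fun i : Fin (d - 1 - 1) => D (Fin.castLE (by omega) i)) (liftPt r (zD r + ζ)))
    (hT : pdet (snoc' X (D ⟨d - 1, by omega⟩)) ≠ 0)
    (zS zT : (Fin (d - 1) → ℝ) →ᵃ[ℝ] ℝ)
    (hzS : ∀ i, zS (projZ (snoc' X (D ⟨d - 2, by omega⟩) i)) =
      zc (snoc' X (D ⟨d - 2, by omega⟩) i))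
    (hzT : ∀ i, zT (projZ (snoc' X (D ⟨d - 1, by omega⟩) i)) =
      zc (snoc' X (D ⟨d - 1, by omega⟩) i)) :
    |(zT (projZ (D ⟨d - 2, by omega⟩)) - zS (projZ (D ⟨d - 2, by omega⟩))) /
        pdet (snoc' X (D ⟨d - 2, by omega⟩))| =
      ζ * |pdet D / (pdet (snoc' X (D ⟨d - 2, by omega⟩)) *
        pdet (snoc' X (D ⟨d - 1, by omega⟩)))| := by
  have hTD : snoc' X (D ⟨d - 1, by omega⟩) = update D ⟨d - 2, by omega⟩ (liftPt r (zD r + ζ)) :=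
    hX ▸ snoc'_snoc'_castLE_eq_update hd D _
  have hzS_eq : zS (projZ (D ⟨d - 2, by omega⟩)) = zD (projZ (D ⟨d - 2, by omega⟩)) := by
    have h := hzS ⟨d - 1, by omega⟩
    rw [snoc'_last] at h
    rw [h, hzD]
  have hcrease := pdet_update_mul_sub_eq (by omega) D _ _ zD zT hzD (hTD ▸ hzT)
  rw [projZ_liftPt, zc_liftPt (by omega), add_sub_cancel_left, ← hTD] at hcrease
  have hgap : zT (projZ (D ⟨d - 2, by omega⟩)) - zD (projZ (D ⟨d - 2, by omega⟩)) =
      ζ * pdet D / pdet (snoc' X (D ⟨d - 1, by omega⟩)) := by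
    rw [eq_div_iff hT, mul_comm, hcrease, mul_comm]
  rw [hzS_eq, hgap, div_div, mul_div_assoc, abs_mul, abs_of_pos hζ, mul_comm (pdet _)]
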